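/- arXiv:1003.1517 — 2 statements merged into one kernel-verified Lean document; each statement's English description precedes it below -/
import Mathlib

section
/- Let f : 2^U → ℝ≥0 be a non-negative submodular function with f(∅) = 0. For any sets C, S₁ ⊆ U, letting C' = C \ S₁, and any S₂ ⊆ U \ S₁, we have f(S₁ ∪ C) + f(S₁ ∩ C) + f(S₂ ∪ C') ≥ f(C). -/
/-! Split `C` into the disjoint parts `S₁ ∩ C` and `C \ S₁`. Because `S₂` misses `S₁`, the part
`C \ S₁` is exactly `(S₂ ∪ (C \ S₁)) ∩ (S₁ ∪ C)`, which submodularity and non-negativity bound by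
`f (S₂ ∪ (C \ S₁)) + f (S₁ ∪ C)`. -/

open Finset

def Submodular {U : Type*} [DecidableEq U] (f : Finset U → ℝ) : Prop :=
  ∀ S T : Finset U, f (S ∪ T) + f (S ∩ T) ≤ f S + f T

namespace Submodular

variable {U : Type*} [DecidableEq U] {f : Finset U → ℝ}

theorem union_le_add_of_disjoint (hf : Submodular f) (h0 : f ∅ = 0) {S T : Finset U}
    (hST : Disjoint S T) : f (S ∪ T) ≤ f S + f T := by
  simpa [disjoint_iff_inter_eq_empty.mp hST, h0] using hf S T

theorem inter_le_add (hf : Submodular f) (hnonneg : ∀ X, 0 ≤ f X) (S T : Finset U) :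
    f (S ∩ T) ≤ f S + f T := by
  linarith [hf S T, hnonneg (S ∪ T)]

theorem le_inter_add_sdiff (hf : Submodular f) (h0 : f ∅ = 0) (C A : Finset U) :
    f C ≤ f (A ∩ C) + f (C \ A) := by
  have hsplit := hf.union_le_add_of_disjoint h0 (disjoint_sdiff_inter C A)
  rw [sdiff_union_inter, inter_comm] at hsplit
  linarith

end Submodular

theorem union_sdiff_inter_union_eq_sdiff {U : Type*} [DecidableEq U] {A B C : Finset U}
    (hB : Disjoint B A) : (B ∪ C \ A) ∩ (A ∪ C) = C \ A := by
  ext x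
  have hx := @disjoint_left.mp hB x
  simp only [mem_inter, mem_union, mem_sdiff]
  tauto

theorem stmt_2 {U : Type*} [DecidableEq U] [Fintype U] (f : Finset U → ℝ)
    (hsub : Submodular f) (hnonneg : ∀ X : Finset U, 0 ≤ f X) (h0 : f ∅ = 0)
    (C S₁ S₂ : Finset U) (hS₂ : S₂ ⊆ Finset.univ \ S₁) :
    f C ≤ f (S₁ ∪ C) + f (S₁ ∩ C) + f (S₂ ∪ (C \ S₁)) := by
  have hdisj : Disjoint S₂ S₁ := by
    rwa [← compl_eq_univ_sdiff, subset_compl_iff_disjoint_right] at hS₂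
  have hC := hsub.le_inter_add_sdiff h0 C S₁
  have hrest := hsub.inter_le_add hnonneg (S₂ ∪ C \ S₁) (S₁ ∪ C)
  rw [union_sdiff_inter_union_eq_sdiff hdisj] at hrest
  linarith
end

section
/- Let C* be ordered greedily with non-increasing marginals w₁ ≥ w₂ ≥ ⋯ ≥ w_t ≥ 0, |C*| = t ≤ k, and f(C*) = ∑ w_j. For τ > 0 let C*_τ = {e_j : w_j ≥ τ}. Then ∑_{i=0}^{⌈log₂(2k)⌉} |C*_{w₁/2^i}|·(w₁/2^i) ≥ f(C*)/4. -/
/-!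
Put `τᵢ = w₁ / 2ⁱ` and `L = ⌈log₂ 2k⌉`. Exchanging the two sums, the right-hand side is
`∑ⱼ ∑ {τᵢ : i ≤ L, τᵢ ≤ w_j}`. If `w_j ≥ τ_L`, then `τᵢ ≤ w_j ≤ 2 τᵢ` for some `i ≤ L`, so the inner
sum is at least `w_j / 2`; in any case it is at least `(w_j - τ_L) / 2`. Since `2k ≤ 2^L`, the
total loss `t τ_L / 2` is at most `w₁ / 4 ≤ f(C*) / 4`.
-/

open Finset

theorem exists_dyadic_level {a x : ℝ} (ha : 0 ≤ a) (hxa : x ≤ a) :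
    ∀ {L : ℕ}, a / 2 ^ L ≤ x → ∃ i ≤ L, a / 2 ^ i ≤ x ∧ x ≤ 2 * (a / 2 ^ i)
  | 0, h => ⟨0, le_rfl, h, by simp only [pow_zero, div_one]; linarith⟩
  | L + 1, h => by
    by_cases hL : a / 2 ^ L ≤ x
    · obtain ⟨i, hiL, hi⟩ := exists_dyadic_level ha hxa hL
      exact ⟨i, hiL.trans L.le_succ, hi⟩
    · refine ⟨L + 1, le_rfl, h, ?_⟩
      rw [pow_succ, ← div_div, mul_div_cancel₀ _ two_ne_zero]
      exact (not_le.mp hL).le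

theorem sub_div_two_le_sum_dyadic_levels {a x : ℝ} (ha : 0 ≤ a) (hxa : x ≤ a) (L : ℕ)
    [DecidablePred fun i : ℕ => a / 2 ^ i ≤ x] :
    (x - a / 2 ^ L) / 2 ≤ ∑ i ∈ (range (L + 1)).filter (fun i => a / 2 ^ i ≤ x), a / 2 ^ i := by
  have hterm_nonneg : ∀ i : ℕ, 0 ≤ a / 2 ^ i := fun i => by positivity
  by_cases hL : a / 2 ^ L ≤ x
  · obtain ⟨i, hiL, hix, hxi⟩ := exists_dyadic_level ha hxa hL
    have hmem : i ∈ (range (L + 1)).filter (fun i => a / 2 ^ i ≤ x) :=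
      mem_filter.mpr ⟨mem_range.mpr (Nat.lt_succ_of_le hiL), hix⟩
    have := single_le_sum (fun i _ => hterm_nonneg i) hmem
    linarith [hterm_nonneg L]
  · have := sum_nonneg fun i (_ : i ∈ (range (L + 1)).filter (fun i => a / 2 ^ i ≤ x)) =>
      hterm_nonneg i
    linarith [not_le.mp hL]

theorem sum_card_filter_mul_eq_sum_sum_filter {ι κ R : Type*} [CommSemiring R]
    (s : Finset ι) (u : Finset κ) (P : ι → κ → Prop) [∀ i, DecidablePred (P i)]
    [∀ j, DecidablePred (P · j)] (f : ι → R) :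
    ∑ i ∈ s, ((u.filter (P i)).card : R) * f i = ∑ j ∈ u, ∑ i ∈ s.filter (P · j), f i := by
  simp_rw [sum_filter, ← nsmul_eq_mul, ← sum_const, sum_filter]
  exact sum_comm

theorem mul_div_two_pow_clog_le {a : ℝ} (ha : 0 ≤ a) {t k : ℕ} (htk : t ≤ k) :
    t * (a / 2 ^ Nat.clog 2 (2 * k)) ≤ a / 2 := by
  have hpow : (2 * t : ℝ) ≤ 2 ^ Nat.clog 2 (2 * k) := by
    exact_mod_cast (Nat.mul_le_mul_left 2 htk).trans (Nat.le_pow_clog one_lt_two _)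
  rw [mul_div_assoc', div_le_div_iff₀ (by positivity) two_pos]
  nlinarith

open scoped Classical in
theorem stmt_13 (k t : ℕ) (ht : 1 ≤ t) (htk : t ≤ k)
    (w : Fin t → ℝ) (hmono : ∀ i l : Fin t, i ≤ l → w l ≤ w i)
    (hnn : ∀ i : Fin t, 0 ≤ w i) :
    (∑ j : Fin t, w j) / 4 ≤
      ∑ i ∈ Finset.range (Nat.clog 2 (2 * k) + 1),
        ((Finset.univ.filter
            (fun j : Fin t => w ⟨0, ht⟩ / 2 ^ i ≤ w j)).card : ℝ) *
          (w ⟨0, ht⟩ / 2 ^ i) := by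
  set a := w ⟨0, ht⟩
  set L := Nat.clog 2 (2 * k)
  have ha : 0 ≤ a := hnn _
  have hw_le : ∀ j, w j ≤ a := fun j => hmono _ j (Fin.mk_le_mk.mpr (Nat.zero_le _))
  have ha_le_sum : a ≤ ∑ j, w j := single_le_sum (fun j _ => hnn j) (mem_univ _)
  rw [sum_card_filter_mul_eq_sum_sum_filter]
  calc (∑ j, w j) / 4
      ≤ (∑ j, w j) / 2 - t * (a / 2 ^ L) / 2 := by linarith [mul_div_two_pow_clog_le ha htk]
    _ = ∑ j, (w j - a / 2 ^ L) / 2 := by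
      rw [← sum_div, sum_sub_distrib, sum_const, card_univ, Fintype.card_fin, nsmul_eq_mul, sub_div]
    _ ≤ _ := sum_le_sum fun j _ => sub_div_two_le_sum_dyadic_levels ha (hw_le j) L
end
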